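/- arXiv:math/0311430 — 2 statements merged into one kernel-verified Lean document; each statement's English description precedes it below -/
import Mathlib

section
/- Let L be a finite meet-semilattice, G a building set in L, X ∈ L \ {0̂} with X ∉ G, and let F_G(X) = max G_{≤X} be the set of factors of X. If S is a G-nested set with ⋁S ≤ X, then S ∪ F_G(X) is G-nested and ⋁(S ∪ F_G(X)) ≤ X. -/
open scoped BigOperators

variable {L : Type*}

/-- The set of maximal elements of `G` below `X` (the `G`-factors of `X`). -/
def factorsSet [PartialOrder L] (G : Set L) (X : L) : Set L :=
  {g | g ∈ G ∧ g ≤ X ∧ ∀ h ∈ G, h ≤ X → g ≤ h → g = h}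

/-- `G` is a building set in the meet-semilattice `L` with minimal element `⊥`:
every element of `G` is nonminimal, and for every `X ≠ ⊥` there is a poset
isomorphism from the product of the lower intervals of the factors of `X`
to the lower interval of `X`, sending the `g`-th "unit vector" to `g`. -/
def IsBuilding (L : Type*) [PartialOrder L] [OrderBot L] (G : Set L) : Prop :=
  (∀ g ∈ G, g ≠ ⊥) ∧
  ∀ X : L, X ≠ ⊥ →
    ∃ φ : ((g : factorsSet G X) → Set.Icc (⊥ : L) g.1) ≃o Set.Icc (⊥ : L) X,
      ∀ (g : factorsSet G X) (u : (h : factorsSet G X) → Set.Icc (⊥ : L) h.1),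
        (u g : L) = g.1 → (∀ h, h ≠ g → (u h : L) = (⊥ : L)) → ((φ u : L) = g.1)

/-- A finite subset `S ⊆ G` is nested: every antichain in `S` of size at least 2
has a least upper bound in `L` which does not belong to `G`. -/
def IsNested [PartialOrder L] (G : Set L) (S : Finset L) : Prop :=
  ↑S ⊆ G ∧ ∀ A : Finset L, A ⊆ S → IsAntichain (· ≤ ·) (A : Set L) → 2 ≤ A.card →
    ∃ j, IsLUB (A : Set L) j ∧ j ∉ G

/-- The nested set complex, as the collection of its faces. -/
def nestedComplex [PartialOrder L] (G : Set L) : Set (Finset L) := {S | IsNested G S}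

/-- The order complex of a poset: the collection of finite chains. -/
def chainComplex (V : Type*) [Preorder V] : Set (Finset V) :=
  {S | IsChain (· ≤ ·) (S : Set V)}

/-- The order complex of `L \ {⊥}`, with vertex set inside `L`. -/
def orderComplexBot (L : Type*) [PartialOrder L] [OrderBot L] : Set (Finset L) :=
  {S | (S : Set L) ⊆ {x | x ≠ ⊥} ∧ IsChain (· ≤ ·) (S : Set L)}

/-- Geometric realization of an abstract simplicial complex (given by its set of
faces, as finsets of the vertex type `V`): convex combinations of vertices
supported on a face. -/
abbrev geomReal {V : Type*} (K : Set (Finset V)) : Type _ :=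
  {f : V → ℝ // (∀ v, 0 ≤ f v) ∧ ∃ s ∈ K, (∀ v, f v ≠ 0 → v ∈ s) ∧ ∑ v ∈ s, f v = 1}

/-- The subposet of the face poset of the nested set complex consisting of the
nonempty nested sets whose join is `≤ X`. -/
def NestedFiber [PartialOrder L] (G : Set L) (X : L) :=
  {S : Finset L // IsNested G S ∧ S.Nonempty ∧ ∃ j, IsLUB (S : Set L) j ∧ j ≤ X}

instance [PartialOrder L] (G : Set L) (X : L) : PartialOrder (NestedFiber G X) := by
  unfold NestedFiber; infer_instance

/-- The face poset of the nested set complex: nonempty nested sets ordered by inclusion. -/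
def NestedFaces [PartialOrder L] (G : Set L) :=
  {S : Finset L // IsNested G S ∧ S.Nonempty}

instance [PartialOrder L] (G : Set L) : PartialOrder (NestedFaces G) := by
  unfold NestedFaces; infer_instance

/-- The combinatorial blowup of a poset `M` at `X`: elements `Y` (marked `false`)
with `Y ≱ X`, and elements `Ŷ` (marked `true`) with `Y ≱ X` such that `Y ∨ X`
exists; ordered by `Y ≺ Z` iff `Y < Z`, `Ŷ ≺ Ẑ` iff `Y < Z`, `Y ≺ Ẑ` iff `Y ≤ Z`. -/
def Bl {M : Type*} [PartialOrder M] (X : M) :=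
  {p : M × Bool // ¬ X ≤ p.1 ∧ (p.2 = true → ∃ j, IsLUB {p.1, X} j)}

noncomputable instance {M : Type*} [PartialOrder M] (X : M) : PartialOrder (Bl X) := by
  unfold Bl; infer_instance

/-- The atoms of `L`, used as coordinates for the realization of nested set fans. -/
def Atoms (L : Type*) [PartialOrder L] [OrderBot L] := {a : L // IsAtom a}

open Classical in
/-- The characteristic vector of the set of atoms below `X`. -/
noncomputable def charVec [PartialOrder L] [OrderBot L] (X : L) : Atoms L → ℝ :=
  fun a => if a.1 ≤ X then 1 else 0

/-- The polyhedral cone spanned by the characteristic vectors of elements of `S`. -/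
noncomputable def coneOf [PartialOrder L] [OrderBot L] (S : Finset L) : Set (Atoms L → ℝ) :=
  {y | ∃ c : L → ℝ, (∀ x, 0 ≤ c x) ∧ y = ∑ x ∈ S, c x • charVec x}

/-- The fan associated to a building set: the cones spanned by the nested sets. -/
def fanOf [PartialOrder L] [OrderBot L] (G : Set L) : Set (Set (Atoms L → ℝ)) :=
  {C | ∃ S : Finset L, IsNested G S ∧ C = coneOf S}

/-- The cone generated by a ray `v` together with a cone `c`. -/
def rayJoin {E : Type*} [AddCommMonoid E] [Module ℝ E] (v : E) (c : Set E) : Set E :=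
  {y | ∃ a : ℝ, ∃ x ∈ c, 0 ≤ a ∧ y = a • v + x}

/-- The stellar subdivision of a fan `F` at the cone `σ` with new ray `v`:
cones not containing `σ` are kept, and each cone `τ ⊇ σ` is replaced by the
joins of `v` with the faces of `τ` not containing `σ`. -/
def stellarSub {E : Type*} [AddCommMonoid E] [Module ℝ E]
    (F : Set (Set E)) (σ : Set E) (v : E) : Set (Set E) :=
  {τ | τ ∈ F ∧ ¬ σ ⊆ τ} ∪
  {D | ∃ τ ∈ F, σ ⊆ τ ∧ ∃ c ∈ F, c ⊆ τ ∧ ¬ σ ⊆ c ∧ D = rayJoin v c}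

/-!
An antichain of `S ∪ F_G(X)` that avoids the factors lies in `S`, so its join is outside `G`
because `S` is nested. If it contains a factor `g` and its join `j` were in `G`, then `j = g` by
maximality of `g` in `G_{≤X}`, and the other members of the antichain would lie below `g`.
Joins of sets bounded by `X` exist because `L` is a finite meet-semilattice.
-/

theorem exists_isLUB_of_bddAbove [SemilatticeInf L] [Finite L] {s : Set L}
    (hs : BddAbove s) : ∃ j, IsLUB s j := by
  have hfin := Set.toFinite (upperBounds s)
  obtain ⟨u, hu⟩ := hs
  exact ⟨hfin.toFinset.inf' ⟨u, hfin.mem_toFinset.mpr hu⟩ id,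
    fun a ha => Finset.le_inf' _ _ fun b hb => hfin.mem_toFinset.mp hb ha,
    fun b hb => Finset.inf'_le _ (hfin.mem_toFinset.mpr hb)⟩

theorem IsLUB.notMem_of_mem_factorsSet [PartialOrder L] {G : Set L} {X g a j : L}
    {A : Set L} (hj : IsLUB A j) (hjX : j ≤ X) (hA : IsAntichain (· ≤ ·) A) (hgA : g ∈ A)
    (hg : g ∈ factorsSet G X) (haA : a ∈ A) (hag : a ≠ g) : j ∉ G := by
  intro hjG
  have hgj : g = j := hg.2.2 j hjG hjX (hj.1 hgA)
  exact hA haA hgA hag (hgj ▸ hj.1 haA)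

theorem le_of_mem_union_factorsSet [PartialOrder L] [DecidableEq L] {G : Set L} {X : L}
    {S F : Finset L} (hSX : ∀ s ∈ S, s ≤ X) (hF : (F : Set L) = factorsSet G X) :
    ∀ b ∈ S ∪ F, b ≤ X := by
  intro b hb
  rcases Finset.mem_union.mp hb with hbS | hbF
  · exact hSX b hbS
  · exact (hF ▸ Finset.mem_coe.mpr hbF : b ∈ factorsSet G X).2.1

theorem IsNested.union_factorsSet [SemilatticeInf L] [Finite L] [DecidableEq L]
    {G : Set L} {X : L} {S F : Finset L} (hS : IsNested G S) (hSX : ∀ s ∈ S, s ≤ X)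
    (hF : (F : Set L) = factorsSet G X) : IsNested G (S ∪ F) := by
  have hFG : (F : Set L) ⊆ G := hF ▸ fun _ hg => hg.1
  refine ⟨by simpa only [Finset.coe_union] using Set.union_subset hS.1 hFG, ?_⟩
  intro A hA hanti hcard
  by_cases hAF : ∃ g ∈ A, g ∈ F
  · obtain ⟨g, hgA, hgF⟩ := hAF
    obtain ⟨a, haA, hag⟩ := Finset.exists_mem_ne hcard g
    have hgX : g ∈ factorsSet G X := hF ▸ Finset.mem_coe.mpr hgF
    have hAX : X ∈ upperBounds (A : Set L) := fun b hb =>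
      le_of_mem_union_factorsSet hSX hF b (hA hb)
    obtain ⟨j, hj⟩ := exists_isLUB_of_bddAbove ⟨X, hAX⟩
    exact ⟨j, hj, hj.notMem_of_mem_factorsSet (hj.2 hAX) hanti hgA hgX haA hag⟩
  · push Not at hAF
    refine hS.2 A (fun a ha => ?_) hanti hcard
    exact (Finset.mem_union.mp (hA ha)).resolve_right (hAF a ha)

theorem stmt5_general (L : Type*) [SemilatticeInf L] [Fintype L] [DecidableEq L]
    (G : Set L) (X : L)
    (F : Finset L) (hF : (F : Set L) = factorsSet G X)
    (S : Finset L) (hS : IsNested G S) (hle : ∃ j, IsLUB (S : Set L) j ∧ j ≤ X) :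
    IsNested G (S ∪ F) ∧ ∃ j, IsLUB ((S ∪ F : Finset L) : Set L) j ∧ j ≤ X := by
  obtain ⟨jS, hjS, hjSX⟩ := hle
  have hSX : ∀ s ∈ S, s ≤ X := fun s hs => (hjS.1 hs).trans hjSX
  have hX : X ∈ upperBounds ((S ∪ F : Finset L) : Set L) :=
    fun b hb => le_of_mem_union_factorsSet hSX hF b hb
  obtain ⟨j, hj⟩ := exists_isLUB_of_bddAbove ⟨X, hX⟩
  exact ⟨hS.union_factorsSet hSX hF, j, hj, hj.2 hX⟩

/-- For `X ∉ G` with factor set `F = F_G(X)`, if `S` is `G`-nested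
with `⋁S ≤ X`, then `S ∪ F_G(X)` is `G`-nested with join `≤ X`. -/
theorem stmt5 (L : Type*) [SemilatticeInf L] [OrderBot L] [Fintype L] [DecidableEq L]
    (G : Set L) (hG : IsBuilding L G) (X : L) (hX : X ≠ ⊥) (hXG : X ∉ G)
    (F : Finset L) (hF : (F : Set L) = factorsSet G X)
    (S : Finset L) (hS : IsNested G S) (hle : ∃ j, IsLUB (S : Set L) j ∧ j ≤ X) :
    IsNested G (S ∪ F) ∧ ∃ j, IsLUB ((S ∪ F : Finset L) : Set L) j ∧ j ≤ X :=
  stmt5_general L G X F hF S hS hle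
end

section
/- Let L be a finite meet-semilattice and G ⊇ H two building sets in L. Then there exists a chain of building sets G = G_1 ⊇ G_2 ⊇ ... ⊇ G_t = H such that each G_i \ G_{i+1} consists of a single element that is minimal in G_i \ H. -/
open scoped BigOperators

variable {L : Type*}

/-! Removing a minimal element `g` of `G \ H` from `G` leaves a building set, and iterating this
over `G \ H` gives the chain. If `g` is not a `G`-factor of `X`, the factors of `X` do not change.
If it is, then every element of `G \ {g}` below `g` lies in `H` by minimality, so the
`G \ {g}`-factors of `X` are the other `G`-factors together with the `H`-factors of `g`; the
decomposition of `[⊥, X]` for `G \ {g}` is obtained by substituting the `H`-decomposition of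
`[⊥, g]` into the `g`-th factor of the `G`-decomposition. -/

open Set Function

section IccProd

open Classical

variable [PartialOrder L] [OrderBot L]

-- Makes every `Icc ⊥ x` a bounded order, so that unit vectors `update ⊥ f ⊤` make sense.
instance (x : L) : Fact (⊥ ≤ x) := ⟨bot_le⟩

abbrev IccProd (F : Set L) : Type _ := (f : F) → Icc (⊥ : L) f.1

def HasUnitVectors {F : Set L} {X : L} (φ : IccProd F ≃o Icc ⊥ X) : Prop :=
  ∀ f : F, (φ (update ⊥ f ⊤) : L) = f

theorem isBuilding_iff {G : Set L} :
    IsBuilding L G ↔ (∀ g ∈ G, g ≠ ⊥) ∧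
      ∀ X : L, X ≠ ⊥ → ∃ φ : IccProd (factorsSet G X) ≃o Icc ⊥ X, HasUnitVectors φ := by
  refine and_congr_right fun _ => forall₂_congr fun X _ => exists_congr fun φ => ?_
  refine ⟨fun h f => h f _ (by simp) fun f' hf' => by simp [hf'], fun h f u hf hu => ?_⟩
  have hu : u = update ⊥ f ⊤ := by
    rw [eq_update_iff]
    exact ⟨Subtype.ext hf, fun f' hf' => Subtype.ext (hu f' hf')⟩
  exact hu ▸ h f

theorem le_update_bot_top_iff {F : Set L} {f : F} {v : IccProd F} :
    v ≤ update ⊥ f ⊤ ↔ ∀ f' ≠ f, v f' = ⊥ := by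
  simp [le_update_iff]

end IccProd

namespace HasUnitVectors

open Classical

variable [PartialOrder L] [OrderBot L] {F : Set L} {X : L} {φ : IccProd F ≃o Icc ⊥ X}

theorem coe_le (hφ : HasUnitVectors φ) (f : F) : (f : L) ≤ X :=
  hφ f ▸ (φ _).2.2

theorem apply_update_le (hφ : HasUnitVectors φ) (f : F) (z : Icc (⊥ : L) f) :
    (φ (update ⊥ f z) : L) ≤ f := by
  rw [← hφ f, Subtype.coe_le_coe, φ.le_iff_le]
  exact update_le_update_iff'.2 le_top

theorem symm_apply_eq_update (hφ : HasUnitVectors φ) {f : F} {y : Icc ⊥ X} (hy : (y : L) ≤ f) :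
    φ.symm y = update ⊥ f (φ.symm y f) := by
  have hle : φ.symm y ≤ update ⊥ f ⊤ := by
    rw [← φ.le_iff_le, φ.apply_symm_apply, ← Subtype.coe_le_coe, hφ f]
    exact hy
  rw [eq_update_iff]
  exact ⟨rfl, le_update_bot_top_iff.1 hle⟩

theorem eq_bot_of_le_of_le (hφ : HasUnitVectors φ) {f₁ f₂ : F} (hne : f₁ ≠ f₂) {y : Icc ⊥ X}
    (h₁ : (y : L) ≤ f₁) (h₂ : (y : L) ≤ f₂) : (y : L) = ⊥ := by
  have hbot : φ.symm y = ⊥ := by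
    funext f
    rcases eq_or_ne f f₁ with rfl | hf
    · rw [hφ.symm_apply_eq_update h₂, update_of_ne hne]
    · rw [hφ.symm_apply_eq_update h₁, update_of_ne hf]
  rw [← φ.apply_symm_apply y, hbot, φ.map_bot]
  rfl

-- Not the identity in general: the unit vector condition only says that it fixes `f`.
noncomputable def factorIso (hφ : HasUnitVectors φ) (f : F) : Icc (⊥ : L) f ≃o Icc (⊥ : L) f :=
  OrderIso.ofSurjective
    (OrderEmbedding.ofMapLEIff (fun z => ⟨φ (update ⊥ f z), bot_le, hφ.apply_update_le f z⟩)
      fun z z' => by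
        change (φ (update ⊥ f z) : L) ≤ φ (update ⊥ f z') ↔ z ≤ z'
        rw [Subtype.coe_le_coe, φ.le_iff_le, update_le_update_iff'])
    fun z => by
      let y : Icc ⊥ X := ⟨z, bot_le, z.2.2.trans (hφ.coe_le f)⟩
      refine ⟨φ.symm y f, Subtype.ext ?_⟩
      change (φ (update ⊥ f (φ.symm y f)) : L) = z
      rw [← hφ.symm_apply_eq_update z.2.2, φ.apply_symm_apply]

theorem coe_factorIso (hφ : HasUnitVectors φ) (f : F) (z : Icc (⊥ : L) f) :
    (hφ.factorIso f z : L) = φ (update ⊥ f z) :=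
  rfl

end HasUnitVectors

section Substitution

open Classical

variable [PartialOrder L] [OrderBot L] {F K : Set L} {g : L}

noncomputable def substFun (θ : IccProd K ≃o Icc ⊥ g) (u : IccProd (F \ {g} ∪ K)) :
    IccProd F := fun f =>
  if h : f.1 = g then ⟨θ (fun k => u ⟨k, Or.inr k.2⟩), bot_le, (θ _).2.2.trans h.ge⟩
  else u ⟨f, Or.inl ⟨f.2, h⟩⟩

theorem substFun_self (θ : IccProd K ≃o Icc ⊥ g) (u : IccProd (F \ {g} ∪ K)) (hg : g ∈ F) :
    substFun θ u ⟨g, hg⟩ = θ (fun k => u ⟨k, Or.inr k.2⟩) :=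
  dif_pos rfl

theorem substFun_of_ne (θ : IccProd K ≃o Icc ⊥ g) (u : IccProd (F \ {g} ∪ K)) {f : F}
    (hf : f.1 ≠ g) : substFun θ u f = u ⟨f, Or.inl ⟨f.2, hf⟩⟩ :=
  dif_neg hf

theorem substFun_mono (θ : IccProd K ≃o Icc ⊥ g) : Monotone (substFun (F := F) θ) := by
  intro u u' huu f
  unfold substFun
  split_ifs
  · exact θ.monotone fun k => huu _
  · exact huu _

noncomputable def unsubstFun (hg : g ∈ F) (θ : IccProd K ≃o Icc ⊥ g) (v : IccProd F) :
    IccProd (F \ {g} ∪ K) := fun f' =>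
  if h : f'.1 ∈ K then θ.symm (v ⟨g, hg⟩) ⟨f', h⟩
  else v ⟨f', (f'.2.resolve_right h).1⟩

theorem unsubstFun_mono (hg : g ∈ F) (θ : IccProd K ≃o Icc ⊥ g) : Monotone (unsubstFun hg θ) := by
  intro v v' hvv f'
  unfold unsubstFun
  split_ifs
  · exact θ.symm.monotone (hvv _) _
  · exact hvv _

theorem unsubstFun_substFun (hg : g ∈ F) (θ : IccProd K ≃o Icc ⊥ g) (u : IccProd (F \ {g} ∪ K)) :
    unsubstFun hg θ (substFun θ u) = u := by
  funext f'
  by_cases h : f'.1 ∈ K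
  · rw [unsubstFun, dif_pos h, substFun_self, θ.symm_apply_apply]
  · obtain ⟨hf'F, hf'g⟩ := f'.2.resolve_right h
    rw [unsubstFun, dif_neg h, substFun_of_ne θ u (f := ⟨f', hf'F⟩) hf'g]

theorem substFun_unsubstFun (hg : g ∈ F) (hK : Disjoint K F) (θ : IccProd K ≃o Icc ⊥ g)
    (v : IccProd F) : substFun θ (unsubstFun hg θ v) = v := by
  funext f
  by_cases h : f.1 = g
  · obtain rfl : f = ⟨g, hg⟩ := Subtype.ext h
    have hrestrict : (fun k : K => unsubstFun hg θ v ⟨k, Or.inr k.2⟩) = θ.symm (v ⟨g, hg⟩) :=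
      funext fun k => dif_pos k.2
    rw [substFun_self, hrestrict, θ.apply_symm_apply]
  · rw [substFun_of_ne θ _ h, unsubstFun, dif_neg (hK.notMem_of_mem_right f.2)]

noncomputable def substPi (hg : g ∈ F) (hK : Disjoint K F) (θ : IccProd K ≃o Icc ⊥ g) :
    IccProd (F \ {g} ∪ K) ≃o IccProd F :=
  Equiv.toOrderIso ⟨substFun θ, unsubstFun hg θ, unsubstFun_substFun hg θ,
    substFun_unsubstFun hg hK θ⟩ (substFun_mono θ) (unsubstFun_mono hg θ)

theorem substFun_update_of_mem (θ : IccProd K ≃o Icc ⊥ g) (hg : g ∈ F) (hK : Disjoint K F)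
    {k : ↥(F \ {g} ∪ K)} (hk : k.1 ∈ K) (z : Icc (⊥ : L) k) :
    substFun θ (update ⊥ k z) = update ⊥ ⟨g, hg⟩ (θ (update ⊥ ⟨k, hk⟩ z)) := by
  funext f
  by_cases h : f.1 = g
  · obtain rfl : f = ⟨g, hg⟩ := Subtype.ext h
    rw [substFun_self, update_self]
    exact congrArg θ (update_comp_eq_of_injective' (⊥ : IccProd (F \ {g} ∪ K))
      (inclusion_injective subset_union_right) ⟨k, hk⟩ z)
  · have hfk : (⟨f, Or.inl ⟨f.2, h⟩⟩ : ↥(F \ {g} ∪ K)) ≠ k :=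
      fun hfk => hK.notMem_of_mem_right f.2 (congrArg Subtype.val hfk ▸ hk)
    rw [substFun_of_ne θ _ h, update_of_ne hfk, update_of_ne fun hf => h (congrArg Subtype.val hf)]
    rfl

theorem substFun_update_of_notMem (θ : IccProd K ≃o Icc ⊥ g) {k : ↥(F \ {g} ∪ K)}
    (hk : k.1 ∉ K) (z : Icc (⊥ : L) k) :
    substFun θ (update ⊥ k z) = update ⊥ ⟨k, (k.2.resolve_right hk).1⟩ z := by
  obtain ⟨hkF, hkg⟩ := k.2.resolve_right hk
  funext f
  by_cases h : f.1 = g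
  · have hg : g ∈ F := h ▸ f.2
    obtain rfl : f = ⟨g, hg⟩ := Subtype.ext h
    have hbot : (fun k' : K => update (⊥ : IccProd (F \ {g} ∪ K)) k z ⟨k', Or.inr k'.2⟩) = ⊥ := by
      funext k'
      exact update_of_ne (fun hk' => hk (congrArg Subtype.val hk' ▸ k'.2)) _ _
    have hgk : (⟨g, hg⟩ : F) ≠ ⟨k, hkF⟩ := fun hk' => hkg (congrArg Subtype.val hk').symm
    rw [substFun_self, hbot, θ.map_bot, update_of_ne hgk]
    rfl
  · rw [substFun_of_ne θ _ h]
    by_cases hfk : f.1 = k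
    · obtain ⟨f, hf⟩ := f
      obtain ⟨k, hk'⟩ := k
      subst hfk
      simp
    · rw [update_of_ne fun h' => hfk (congrArg Subtype.val h'),
        update_of_ne fun h' => hfk (congrArg Subtype.val h')]
      rfl

end Substitution

-- `factorIso` is undone on the factor `g`, so that each new factor lands on itself.
open Classical in
theorem HasUnitVectors.exists_sdiff_union [PartialOrder L] [OrderBot L] {F K : Set L} {g X : L}
    {φ : IccProd F ≃o Icc ⊥ X} (hφ : HasUnitVectors φ) (hg : g ∈ F) (hK : Disjoint K F)
    {ψ : IccProd K ≃o Icc ⊥ g} (hψ : HasUnitVectors ψ) :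
    ∃ Φ : IccProd (F \ {g} ∪ K) ≃o Icc ⊥ X, HasUnitVectors Φ := by
  let θ := ψ.trans (hφ.factorIso ⟨g, hg⟩).symm
  refine ⟨(substPi hg hK θ).trans φ, fun k => ?_⟩
  change (φ (substFun θ (update ⊥ k ⊤)) : L) = k
  by_cases hk : k.1 ∈ K
  · rw [substFun_update_of_mem θ hg hK hk, ← hφ.coe_factorIso]
    change ((hφ.factorIso ⟨g, hg⟩) ((hφ.factorIso ⟨g, hg⟩).symm (ψ (update ⊥ ⟨k, hk⟩ ⊤))) : L) = k
    rw [OrderIso.apply_symm_apply, hψ]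
  · rw [substFun_update_of_notMem θ hk]
    exact hφ _

section Factors

variable [PartialOrder L] {G H : Set L} {g X : L}

theorem exists_mem_factorsSet_ge [Finite L] {x : L} (hx : x ∈ G) (hxX : x ≤ X) :
    ∃ f ∈ factorsSet G X, x ≤ f := by
  obtain ⟨f, ⟨hfG, hfX, hxf⟩, hmax⟩ :=
    (toFinite {y | y ∈ G ∧ y ≤ X ∧ x ≤ y}).exists_maximalFor id _ ⟨x, hx, hxX, le_rfl⟩
  exact ⟨f, ⟨hfG, hfX, fun h hh hhX hfh => le_antisymm hfh (hmax ⟨hh, hhX, hxf.trans hfh⟩ hfh)⟩, hxf⟩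

theorem factorsSet_sdiff_singleton_of_notMem (hg : g ∉ factorsSet G X) :
    factorsSet (G \ {g}) X = factorsSet G X := by
  ext x
  constructor
  · rintro ⟨⟨hxG, hxg⟩, hxX, hxmax⟩
    refine ⟨hxG, hxX, fun h hh hhX hxh => ?_⟩
    obtain rfl | hhg := eq_or_ne h g
    · -- `h` is not maximal, so something in `G \ {h}` lies above it, and hence above `x`
      obtain ⟨h', hh'G, hh'X, hhh', hne⟩ : ∃ h' ∈ G, h' ≤ X ∧ h ≤ h' ∧ h ≠ h' := by
        simpa [factorsSet, hh, hhX] using hg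
      have hxh' := hxmax h' ⟨hh'G, hne.symm⟩ hh'X (hxh.trans hhh')
      exact absurd (le_antisymm hxh (hxh' ▸ hhh')) hxg
    · exact hxmax h ⟨hh, hhg⟩ hhX hxh
  · rintro ⟨hxG, hxX, hxmax⟩
    exact ⟨⟨hxG, fun hxg => hg (hxg ▸ ⟨hxG, hxX, hxmax⟩)⟩, hxX, fun h hh => hxmax h hh.1⟩

theorem disjoint_factorsSet (hg : g ∈ factorsSet G X) (hgH : g ∉ H) :
    Disjoint (factorsSet H g) (factorsSet G X) :=
  Set.disjoint_left.2 fun _ hkH hkG => hgH (hkG.2.2 g hg.1 hg.2.1 hkH.2.1 ▸ hkH.1)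

variable [OrderBot L]

theorem IsBuilding.eq_bot_of_le_of_le (hG : IsBuilding L G) {f₁ f₂ z : L}
    (h₁ : f₁ ∈ factorsSet G X) (h₂ : f₂ ∈ factorsSet G X) (hne : f₁ ≠ f₂)
    (hz₁ : z ≤ f₁) (hz₂ : z ≤ f₂) : z = ⊥ := by
  by_cases hX : X = ⊥
  · exact le_bot_iff.1 (hX ▸ hz₁.trans h₁.2.1)
  obtain ⟨φ, hφ⟩ := (isBuilding_iff.1 hG).2 X hX
  exact hφ.eq_bot_of_le_of_le (f₁ := ⟨f₁, h₁⟩) (f₂ := ⟨f₂, h₂⟩) (by simpa using hne)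
    (y := ⟨z, bot_le, hz₁.trans h₁.2.1⟩) hz₁ hz₂

theorem factorsSet_sdiff_singleton [Finite L] (hG : IsBuilding L G) (hH : ∀ h ∈ H, h ≠ ⊥)
    (hHG : H ⊆ G) (hmin : Minimal (· ∈ G \ H) g) (hg : g ∈ factorsSet G X) :
    factorsSet (G \ {g}) X = factorsSet G X \ {g} ∪ factorsSet H g := by
  have mem_H : ∀ y ∈ G \ {g}, y ≤ g → y ∈ H := fun y hy hyg =>
    by_contra fun hyH => hy.2 (hmin.eq_of_le ⟨hy.1, hyH⟩ hyg)
  have hgH : g ∉ H := hmin.1.2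
  ext x
  constructor
  · rintro ⟨hxG, hxX, hxmax⟩
    obtain ⟨f, hf, hxf⟩ := exists_mem_factorsSet_ge hxG.1 hxX
    by_cases hfg : f = g
    · rw [hfg] at hxf
      obtain ⟨h, hh, hxh⟩ := exists_mem_factorsSet_ge (mem_H x hxG hxf) hxf
      have hxh := hxmax h ⟨hHG hh.1, ne_of_mem_of_not_mem hh.1 hgH⟩ (hh.2.1.trans hg.2.1) hxh
      exact Or.inr (hxh ▸ hh)
    · exact Or.inl ⟨hxmax f ⟨hf.1, hfg⟩ hf.2.1 hxf ▸ hf, hxG.2⟩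
  · rintro (⟨⟨hxG, hxX, hxmax⟩, hxg⟩ | ⟨hxH, hxg, hxmax⟩)
    · exact ⟨⟨hxG, hxg⟩, hxX, fun h hh => hxmax h hh.1⟩
    refine ⟨⟨hHG hxH, ne_of_mem_of_not_mem hxH hgH⟩, hxg.trans hg.2.1, fun y hy hyX hxy => ?_⟩
    obtain ⟨f, hf, hyf⟩ := exists_mem_factorsSet_ge hy.1 hyX
    by_cases hfg : f = g
    · rw [hfg] at hyf
      obtain ⟨h, hh, hyh⟩ := exists_mem_factorsSet_ge (mem_H y hy hyf) hyf
      exact le_antisymm hxy (hxmax h hh.1 hh.2.1 (hxy.trans hyh) ▸ hyh)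
    · -- the `H`-factor `x` of `g` would lie below two distinct `G`-factors of `X`
      exact absurd (hG.eq_bot_of_le_of_le hf hg hfg (hxy.trans hyf) hxg) (hH x hxH)

end Factors

section Chain

variable [PartialOrder L] [OrderBot L] [Finite L] {G H : Set L}

theorem IsBuilding.sdiff_singleton (hG : IsBuilding L G) (hH : IsBuilding L H) (hHG : H ⊆ G)
    {g : L} (hmin : Minimal (· ∈ G \ H) g) : IsBuilding L (G \ {g}) := by
  obtain ⟨hGbot, hGdecomp⟩ := isBuilding_iff.1 hG
  refine isBuilding_iff.2 ⟨fun x hx => hGbot x hx.1, fun X hX => ?_⟩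
  by_cases hg : g ∈ factorsSet G X
  · obtain ⟨φ, hφ⟩ := hGdecomp X hX
    obtain ⟨ψ, hψ⟩ := (isBuilding_iff.1 hH).2 g (hGbot g hmin.1.1)
    rw [factorsSet_sdiff_singleton hG hH.1 hHG hmin hg]
    exact hφ.exists_sdiff_union hg (disjoint_factorsSet hg hmin.1.2) hψ
  · rw [factorsSet_sdiff_singleton_of_notMem hg]
    exact hGdecomp X hX

theorem IsBuilding.exists_chain (hG : IsBuilding L G) (hH : IsBuilding L H) (hHG : H ⊆ G) :
    ∃ t : ℕ, ∃ c : ℕ → Set L,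
      c 0 = G ∧ c t = H ∧ (∀ i ≤ t, IsBuilding L (c i)) ∧
      ∀ i < t, c (i + 1) ⊆ c i ∧
        ∃ g : L, c i \ c (i + 1) = {g} ∧ g ∈ c i ∧ g ∉ H ∧
          ∀ x ∈ c i, x ∉ H → x ≤ g → x = g := by
  induction hn : (G \ H).ncard generalizing G with
  | zero =>
    have hGH : G = H := hHG.antisymm' (sdiff_eq_empty.1 ((ncard_eq_zero (toFinite _)).1 hn))
    exact ⟨0, fun _ => G, rfl, hGH, fun _ _ => hG, fun _ h => absurd h (Nat.not_lt_zero _)⟩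
  | succ n ih =>
    obtain ⟨g, hmin⟩ := (toFinite (G \ H)).exists_minimal (nonempty_of_ncard_ne_zero (by omega))
    have hHG' : H ⊆ G \ {g} := fun x hx => ⟨hHG hx, ne_of_mem_of_not_mem hx hmin.1.2⟩
    have hn' : ((G \ {g}) \ H).ncard = n := by
      rw [sdiff_sdiff_comm, ncard_sdiff_singleton_of_mem hmin.1, hn, Nat.add_sub_cancel]
    obtain ⟨t, c, hc0, hct, hcB, hstep⟩ := ih (hG.sdiff_singleton hH hHG hmin) hHG' hn'
    refine ⟨t + 1, Stream'.cons G c, rfl, hct, ?_, ?_⟩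
    · rintro (_ | i) hi
      exacts [hG, hcB i (by omega)]
    · rintro (_ | i) hi
      · dsimp only [Stream'.cons]
        rw [hc0]
        exact ⟨sdiff_subset, g, sdiff_sdiff_cancel_left (singleton_subset_iff.2 hmin.1.1),
          hmin.1.1, hmin.1.2, fun x hx hxH hxg => hmin.eq_of_le ⟨hx, hxH⟩ hxg⟩
      · exact hstep i (by omega)

end Chain

/-- For building sets `G ⊇ H` there is a chain of building sets
`G = G₁ ⊇ ... ⊇ G_t = H` with each consecutive difference a single element,
minimal in `Gᵢ \ H`. -/
theorem stmt11 (L : Type*) [SemilatticeInf L] [OrderBot L] [Fintype L]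
    (G H : Set L) (hG : IsBuilding L G) (hH : IsBuilding L H) (hHG : H ⊆ G) :
    ∃ t : ℕ, ∃ c : ℕ → Set L,
      c 0 = G ∧ c t = H ∧ (∀ i ≤ t, IsBuilding L (c i)) ∧
      ∀ i < t, c (i + 1) ⊆ c i ∧
        ∃ g : L, c i \ c (i + 1) = {g} ∧ g ∈ c i ∧ g ∉ H ∧
          ∀ x ∈ c i, x ∉ H → x ≤ g → x = g :=
  hG.exists_chain hH hHG
end
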